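/- Let (X, ρ) be a metric space, λ ∈ Δ∞, and x = (x_k)_{k∈ℕ} a sequence in X. Then x is λ-statistically Cauchy if and only if for every η > 0 the set {j ∈ ℕ : D_j(η) does not have λ-density zero} has λ-density zero, where D_j(η) = {k ∈ ℕ : ρ(x_k, x_j) ≥ η}. (Equivalence (1) ⇔ (3) of the paper's Lemma 3.6.) -/

import Mathlib

open Filter Topology

/-- `l` belongs to the class `Δ∞`: a nondecreasing (for indices `≥ 1`) sequence of
positive reals tending to `∞` with `l 1 = 1` and `l (n+1) ≤ l n + 1`. -/
def DeltaInfty (l : ℕ → ℝ) : Prop :=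
  (∀ n, 1 ≤ n → 0 < l n) ∧ (∀ m n, 1 ≤ m → m ≤ n → l m ≤ l n) ∧
    Tendsto l atTop atTop ∧ l 1 = 1 ∧ ∀ n, 1 ≤ n → l (n + 1) ≤ l n + 1

open Classical in
/-- The number of elements of `M` in the window `I_n = [n - l n + 1, n] ∩ ℕ`. -/
noncomputable def lamCount (l : ℕ → ℝ) (M : Set ℕ) (n : ℕ) : ℕ :=
  ((Finset.Icc 1 n).filter (fun (k : ℕ) => ((n : ℝ) - l n + 1 ≤ (k : ℝ)) ∧ k ∈ M)).card

/-- `M ⊆ ℕ` has `λ`-density `r`: `|{k ∈ I_n : k ∈ M}| / l n → r`. -/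
def lamDensity (l : ℕ → ℝ) (M : Set ℕ) (r : ℝ) : Prop :=
  Tendsto (fun n => (lamCount l M n : ℝ) / l n) atTop (𝓝 r)

/-- `x` is `λ`-statistically Cauchy in the metric space `X`. -/
def LamStatCauchy {X : Type*} [MetricSpace X] (l : ℕ → ℝ) (x : ℕ → X) : Prop :=
  ∀ η > 0, ∃ N₀ : ℕ, lamDensity l {k | η ≤ dist (x k) (x N₀)} 0

/-!
Forward direction: if the `η/2`-ball around `x N₀` carries almost all indices, then for every
`j` in that ball the triangle inequality puts `D_j(η)` inside `D_{N₀}(η/2)`, a set of density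
zero, so the bad indices lie in `D_{N₀}(η/2)`. Backward direction: the windows `I_n` contain
at least `λ_n - 1` integers, so `ℕ` itself does not have `λ`-density zero; hence the bad set is
not all of `ℕ`, and any good index `j` serves as `N₀`.
-/

section LamDensity

variable {l : ℕ → ℝ}

lemma lamCount_mono {M M' : Set ℕ} (h : M ⊆ M') (n : ℕ) : lamCount l M n ≤ lamCount l M' n := by
  classical
  unfold lamCount
  exact Finset.card_le_card <| Finset.monotone_filter_right _ fun _ _ hk => ⟨hk.1, h hk.2⟩

lemma lamDensity_zero_of_subset (hl : ∀ᶠ n in atTop, 0 ≤ l n) {M M' : Set ℕ} (h : M ⊆ M')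
    (h' : lamDensity l M' 0) : lamDensity l M 0 := by
  refine squeeze_zero' ?_ ?_ h'
  · filter_upwards [hl] with n hn
    positivity
  · filter_upwards [hl] with n hn
    gcongr
    exact_mod_cast lamCount_mono h n

lemma floor_le_lamCount_univ {n : ℕ} (h₀ : 0 ≤ l n) (hn : l n ≤ n) :
    ⌊l n⌋₊ ≤ lamCount l Set.univ n := by
  classical
  have hfloor : ⌊l n⌋₊ ≤ n := Nat.floor_le_of_le hn
  calc ⌊l n⌋₊ = (Finset.Icc (n + 1 - ⌊l n⌋₊) n).card := by rw [Nat.card_Icc]; omega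
    _ ≤ lamCount l Set.univ n := by
      unfold lamCount
      refine Finset.card_le_card fun k hk => ?_
      rw [Finset.mem_Icc] at hk
      have hk' : (n : ℝ) + 1 - ⌊l n⌋₊ ≤ k := by
        have := (Nat.cast_le (α := ℝ)).2 hk.1
        rwa [Nat.cast_sub (by omega), Nat.cast_add, Nat.cast_one] at this
      have := Nat.floor_le h₀
      simp only [Finset.mem_filter, Finset.mem_Icc, Set.mem_univ, and_true]
      exact ⟨⟨by omega, hk.2⟩, by linarith⟩

end LamDensity

namespace DeltaInfty

variable {l : ℕ → ℝ}

lemma le_self (hl : DeltaInfty l) {n : ℕ} (hn : 1 ≤ n) : l n ≤ n := by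
  induction n, hn using Nat.le_induction with
  | base => simp [hl.2.2.2.1]
  | succ m hm ih =>
    push_cast
    linarith [hl.2.2.2.2 m hm]

lemma eventually_nonneg (hl : DeltaInfty l) : ∀ᶠ n in atTop, 0 ≤ l n :=
  hl.2.2.1.eventually_ge_atTop 0

lemma not_lamDensity_univ_zero (hl : DeltaInfty l) : ¬ lamDensity l Set.univ 0 := by
  intro h
  have hsmall : ∀ᶠ n in atTop, (lamCount l Set.univ n : ℝ) / l n < 1 / 2 :=
    h.eventually (gt_mem_nhds one_half_pos)
  have hlarge : ∀ᶠ n in atTop, 1 / 2 ≤ (lamCount l Set.univ n : ℝ) / l n := by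
    filter_upwards [eventually_ge_atTop 1, hl.2.2.1.eventually_ge_atTop 2] with n hn h2
    have hcount : l n - 1 ≤ lamCount l Set.univ n :=
      calc l n - 1 ≤ ⌊l n⌋₊ := (Nat.sub_one_lt_floor _).le
        _ ≤ lamCount l Set.univ n := by
          exact_mod_cast floor_le_lamCount_univ (by linarith) (hl.le_self hn)
    rw [le_div_iff₀ (by linarith)]
    linarith
  obtain ⟨n, hn, hn'⟩ := (hsmall.and hlarge).exists
  linarith

end DeltaInfty

lemma setOf_le_dist_subset {ι X : Type*} [PseudoMetricSpace X] (x : ι → X) {a b : X} {η δ : ℝ}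
    (h : dist a b + δ ≤ η) : {i | η ≤ dist (x i) a} ⊆ {i | δ ≤ dist (x i) b} := fun i hi => by
  have := dist_triangle (x i) b a
  rw [dist_comm b a] at this
  simp only [Set.mem_ofPred_eq] at hi ⊢
  linarith

theorem lamStatCauchy_iff_density_of_bad_indices {X : Type*} [MetricSpace X]
    (l : ℕ → ℝ) (hl : DeltaInfty l) (x : ℕ → X) :
    LamStatCauchy l x ↔
      ∀ η > 0, lamDensity l {j | ¬ lamDensity l {k | η ≤ dist (x k) (x j)} 0} 0 := by
  constructor
  · intro hx η hη
    obtain ⟨N₀, hN₀⟩ := hx (η / 2) (by positivity)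
    refine lamDensity_zero_of_subset hl.eventually_nonneg (fun j hj => ?_) hN₀
    by_contra hnear
    apply hj
    refine lamDensity_zero_of_subset hl.eventually_nonneg
      (setOf_le_dist_subset x (δ := η / 2) ?_) hN₀
    simp only [Set.mem_ofPred_eq, not_le] at hnear
    linarith
  · intro hbad η hη
    obtain ⟨j, hj⟩ : ∃ j, j ∉ {j | ¬ lamDensity l {k | η ≤ dist (x k) (x j)} 0} := by
      by_contra! hall
      exact hl.not_lamDensity_univ_zero (Set.eq_univ_of_forall hall ▸ hbad η hη)
    exact ⟨j, not_not.1 hj⟩
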